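/- arXiv:1111.3252 — 3 statements merged into one kernel-verified Lean document; each statement's English description precedes it below -/
import Mathlib

section
/- Let H be a simple k-regular hypergraph with d vertices and m edges. If m > d + C(d,2) + C(d,3), then k·d ≥ 4m − 3d − 2·C(d,2) − C(d,3). -/
/-- A simple `k`-regular hypergraph on vertex set `Fin d`: a finite family of
distinct nonempty edges such that every vertex lies in exactly `k` edges. -/
def IsRegularHypergraph (d k : ℕ) (E : Finset (Finset (Fin d))) : Prop :=
  (∀ e ∈ E, e.Nonempty) ∧ ∀ v : Fin d, (E.filter (fun e => v ∈ e)).card = k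

/-!
Counting vertex–edge incidences gives `k * d = ∑ |e|`. Each edge with `|e| ≥ r` contributes at
least `r` to this sum, and an edge of size `i < r` falls short of `r` by `r - i`; since the edges are
distinct, there are at most `C(d, i)` edges of size `i`. For `r = 4` the total shortfall is at most
`3 d + 2 C(d,2) + C(d,3)`.
-/

open Finset

variable {α : Type*} [Fintype α]

theorem Finset.card_filter_card_eq_le_choose (E : Finset (Finset α)) (i : ℕ) :
    #{e ∈ E | #e = i} ≤ (Fintype.card α).choose i := by
  rw [← card_univ, ← card_powersetCard]
  exact card_le_card fun e he => by simp_all [mem_powersetCard]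

theorem Finset.sum_tsub_card_le_sum_choose (E : Finset (Finset α))
    (hne : ∀ e ∈ E, e.Nonempty) (r : ℕ) :
    ∑ e ∈ E, (r - #e) ≤ ∑ i ∈ Ico 1 r, (r - i) * (Fintype.card α).choose i := by
  have hsupport : ∀ e ∈ E, r - #e ≠ 0 → #e ∈ Ico 1 r := fun e he hr =>
    mem_Ico.2 ⟨card_pos.2 (hne e he), by omega⟩
  calc ∑ e ∈ E, (r - #e)
      = ∑ e ∈ E with #e ∈ Ico 1 r, (r - #e) := (sum_filter_of_ne hsupport).symm
    _ = ∑ i ∈ Ico 1 r, ∑ e ∈ E with #e = i, (r - #e) := by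
        rw [← sum_fiberwise_of_maps_to (g := card) fun e he => (mem_filter.1 he).2]
        simp only [filter_filter]
        refine sum_congr rfl fun i _ => sum_congr ?_ fun _ _ => rfl
        ext e
        simp only [mem_filter]
        grind
    _ = ∑ i ∈ Ico 1 r, (r - i) * #{e ∈ E | #e = i} :=
        sum_congr rfl fun i _ => by
          rw [sum_congr rfl fun e he => by rw [(mem_filter.1 he).2], sum_const, smul_eq_mul,
            mul_comm]
    _ ≤ ∑ i ∈ Ico 1 r, (r - i) * (Fintype.card α).choose i :=
        sum_le_sum fun i _ => Nat.mul_le_mul_left _ (card_filter_card_eq_le_choose E i)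

theorem Finset.mul_card_le_sum_card_add_sum_choose (E : Finset (Finset α))
    (hne : ∀ e ∈ E, e.Nonempty) (r : ℕ) :
    r * #E ≤ ∑ e ∈ E, #e + ∑ i ∈ Ico 1 r, (r - i) * (Fintype.card α).choose i :=
  calc r * #E = ∑ e ∈ E, r := by rw [sum_const, smul_eq_mul, mul_comm]
    _ ≤ ∑ e ∈ E, (#e + (r - #e)) := sum_le_sum fun e _ => le_add_tsub
    _ = ∑ e ∈ E, #e + ∑ e ∈ E, (r - #e) := sum_add_distrib
    _ ≤ _ := Nat.add_le_add_left (sum_tsub_card_le_sum_choose E hne r) _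

theorem stmt_7_general (d k : ℕ) (E : Finset (Finset (Fin d)))
    (hE : IsRegularHypergraph d k E) :
    k * d + 3 * d + 2 * d.choose 2 + d.choose 3 ≥ 4 * E.card := by
  obtain ⟨hne, hreg⟩ := hE
  have hdegree : ∑ e ∈ E, #e = d * k := by simpa using sum_card hreg
  have hsize := mul_card_le_sum_card_add_sum_choose E hne 4
  norm_num [hdegree, sum_Ico_eq_sum_range, sum_range_succ] at hsize
  lia

theorem stmt_7 (d k : ℕ) (E : Finset (Finset (Fin d)))
    (hE : IsRegularHypergraph d k E)
    (hm : E.card > d + d.choose 2 + d.choose 3) :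
    k * d + 3 * d + 2 * d.choose 2 + d.choose 3 ≥ 4 * E.card :=
  stmt_7_general d k E hE
end

section
/- Let k and d be positive integers with k ≤ d and d > 2. Then the determining number of the Kneser graph K_{n:k} with n = ⌊d(k+1)/2⌋ + 1 equals d. -/
/-- A set `S` of vertices is a determining set of `G` if any two automorphisms
agreeing on `S` are equal. -/
def IsDeterminingSet {V : Type*} (G : SimpleGraph V) (S : Set V) : Prop :=
  ∀ g h : G ≃g G, (∀ v ∈ S, g v = h v) → g = h

/-- The determining number of a graph: the minimum cardinality of a determining set. -/
noncomputable def detNumber {V : Type*} (G : SimpleGraph V) : ℕ :=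
  sInf {m | ∃ S : Finset V, S.card = m ∧ IsDeterminingSet G (S : Set V)}

/-- The Kneser graph `K_{n:k}`: vertices are the `k`-subsets of `[n]`,
edges join disjoint sets. -/
def kneserGraph (n k : ℕ) : SimpleGraph {s : Finset (Fin n) // s.card = k} where
  Adj a b := Disjoint (a : Finset (Fin n)) (b : Finset (Fin n)) ∧ a ≠ b
  symm := ⟨fun a b h => ⟨h.1.symm, h.2.symm⟩⟩
  loopless := ⟨fun a h => h.2 rfl⟩


/-!
A set `S` of `k`-subsets of `[n]` is determining for `K(n:k)` (with `n ≥ 2k + 1`) exactly when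
it separates points, i.e. no two points lie in the same members of `S`. A transposition of two
inseparable points would be a nontrivial automorphism fixing `S`; conversely every automorphism
is induced by a permutation of `[n]`. For the latter, the number of common neighbours of two
vertices `A, B` is `C(n - |A ∪ B|, k)`, so automorphisms preserve Johnson adjacency
`|A ∪ B| = k + 1`; the large cliques of the Johnson graph are stars of `(k-1)`-sets (a sunflower
argument), which yields a compatible permutation of the `(k-1)`-sets, and descending level by
level one reaches a permutation of the points.

Lower bound: the traces of the `n` points on a separating family of `m` sets are distinct subsets
of an `m`-set with total size `mk`; at most one is empty and at most `m` are singletons, so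
`2n ≤ 2 + m(k + 1)`, which forces `m ≥ d`. Upper bound: transposing the incidence relation, it
suffices to find `n` distinct subsets of `[d]` each point lying in exactly `k` of them: take `∅`,
the singletons and the edges of a circulant graph on `ℤ/d`, plus a near-perfect matching when `k`
is even.
-/

open Finset Function

abbrev Slice (n j : ℕ) := {s : Finset (Fin n) // #s = j}

namespace Slice

variable {n j : ℕ}

theorem subset_iff_eq {S T : Slice n j} : S.val ⊆ T.val ↔ S = T :=
  ⟨fun h => Subtype.ext (eq_of_subset_of_card_le h (by rw [S.2, T.2])),
    fun h => h ▸ subset_rfl⟩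

theorem lt_card_union {S T : Slice n j} (h : S ≠ T) : j < #(S.val ∪ T.val) := by
  by_contra! hle
  have hS : S.val ∪ T.val = S.val :=
    (eq_of_subset_of_card_le subset_union_left (by rw [S.2]; exact hle)).symm
  exact h (subset_iff_eq.mp (hS ▸ subset_union_right)).symm

theorem card_union_le (S T : Slice n j) : #(S.val ∪ T.val) ≤ 2 * j := by
  have := Finset.card_union_le S.val T.val
  rw [S.2, T.2] at this
  omega

theorem exists_between {s t : Finset (Fin n)} (hst : s ⊆ t) (hs : #s ≤ j) (ht : j ≤ #t) :
    ∃ T : Slice n j, s ⊆ T.val ∧ T.val ⊆ t := by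
  obtain ⟨T, hsT, hTt, hT⟩ := exists_subsuperset_card_eq hst hs ht
  exact ⟨⟨T, hT⟩, hsT, hTt⟩

theorem exists_superset_notMem {s : Finset (Fin n)} {a : Fin n} (ha : a ∉ s) (hs : #s ≤ j)
    (hjn : j < n) : ∃ T : Slice n j, s ⊆ T.val ∧ a ∉ T.val := by
  obtain ⟨T, hsT, hTa⟩ := exists_between (t := univ.erase a) (fun x hx => by grind) hs
    (by rw [card_erase_of_mem (mem_univ a), card_univ, Fintype.card_fin]; omega)
  exact ⟨T, hsT, fun h => by simpa using hTa h⟩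

end Slice

theorem Nat.choose_lt_succ {m k : ℕ} (hk : 1 ≤ k) (hkm : k ≤ m + 1) :
    m.choose k < (m + 1).choose k := by
  obtain ⟨k, rfl⟩ : ∃ k', k = k' + 1 := ⟨k - 1, by omega⟩
  rw [Nat.choose_succ_succ']
  have := Nat.choose_pos (show k ≤ m by omega)
  omega

theorem SimpleGraph.Iso.ncard_commonNeighbors {V W : Type*} {G : SimpleGraph V}
    {G' : SimpleGraph W} (g : G ≃g G') (v w : V) :
    (G'.commonNeighbors (g v) (g w)).ncard = (G.commonNeighbors v w).ncard := by
  have hpre : g ⁻¹' G'.commonNeighbors (g v) (g w) = G.commonNeighbors v w := by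
    ext u
    simp [SimpleGraph.mem_commonNeighbors, g.map_adj_iff]
  rw [← hpre, Set.ncard_preimage_of_injective_subset_range g.injective (by simp)]

section Kneser

variable {n k : ℕ}

def kneserPermAut (σ : Equiv.Perm (Fin n)) : kneserGraph n k ≃g kneserGraph n k where
  toEquiv := σ.finsetCongr.subtypeEquiv fun s => by simp [Equiv.finsetCongr_apply]
  map_rel_iff' {A B} := by
    simp [kneserGraph, Equiv.finsetCongr_apply, Finset.disjoint_map, Subtype.ext_iff]

@[simp]
theorem kneserPermAut_apply_val (σ : Equiv.Perm (Fin n)) (A : Slice n k) :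
    (kneserPermAut σ A).val = A.val.map σ.toEmbedding :=
  rfl

theorem kneserGraph_ncard_commonNeighbors (hk : 1 ≤ k) (A B : Slice n k) :
    ((kneserGraph n k).commonNeighbors A B).ncard = (n - #(A.val ∪ B.val)).choose k := by
  have hcn : (kneserGraph n k).commonNeighbors A B =
      Subtype.val ⁻¹' ↑((A.val ∪ B.val)ᶜ.powersetCard k) := by
    ext C
    have hC : C.val.Nonempty := card_pos.mp (by rw [C.2]; omega)
    simp only [SimpleGraph.mem_commonNeighbors, kneserGraph, Set.mem_preimage, mem_coe,
      mem_powersetCard, subset_compl_iff_disjoint_left, disjoint_union_left, C.2, and_true]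
    constructor
    · rintro ⟨⟨hA, -⟩, hB, -⟩
      exact ⟨hA, hB⟩
    · rintro ⟨hA, hB⟩
      refine ⟨⟨hA, ?_⟩, hB, ?_⟩ <;> rintro rfl <;> simp_all
  rw [hcn, Set.ncard_preimage_of_injective_subset_range Subtype.val_injective
    (fun s hs => ⟨⟨s, (mem_powersetCard.mp hs).2⟩, rfl⟩), Set.ncard_coe_finset,
    card_powersetCard, card_compl, Fintype.card_fin]

theorem kneserGraph_card_union_eq_succ_iff (hk : 1 ≤ k) (hn : 2 * k + 1 ≤ n)
    (A B : Slice n k) :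
    #(A.val ∪ B.val) = k + 1 ↔
      A ≠ B ∧ ((kneserGraph n k).commonNeighbors A B).ncard = (n - (k + 1)).choose k := by
  rw [kneserGraph_ncard_commonNeighbors hk]
  refine ⟨fun h => ⟨fun hAB => ?_, by rw [h]⟩, fun ⟨hAB, hcn⟩ => ?_⟩
  · subst hAB
    simp [A.2] at h
  · have hlt := Slice.lt_card_union hAB
    have hle := Slice.card_union_le A B
    by_contra hne
    have hmono : (n - #(A.val ∪ B.val)).choose k ≤ (n - (k + 2)).choose k :=
      Nat.choose_le_choose k (by omega)
    have hstrict := Nat.choose_lt_succ (m := n - (k + 2)) hk (by omega)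
    rw [show n - (k + 2) + 1 = n - (k + 1) by omega] at hstrict
    omega

end Kneser

section Sunflower

variable {α : Type*} [DecidableEq α] {j : ℕ}

/-- `#(C ∩ (A ∪ B)) = #(C ∩ A) + #(C ∩ B) - #(C ∩ A ∩ B)`, and the last term is `< j` unless
`A ∩ B ⊆ C`. -/
theorem inter_subset_or_subset_union {A B C : Finset α} (hC : #C = j + 1) (hAB : #(A ∩ B) = j)
    (hCA : #(C ∩ A) = j) (hCB : #(C ∩ B) = j) : A ∩ B ⊆ C ∨ C ⊆ A ∪ B := by
  by_contra! h
  have hlt : #(C ∩ (A ∩ B)) < j := hAB ▸ card_lt_card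
    (ssubset_of_subset_of_ne inter_subset_right fun he => h.1 (he ▸ inter_subset_left))
  have hsum := card_union_add_card_inter (C ∩ A) (C ∩ B)
  rw [← inter_union_distrib_left, ← inter_inter_distrib_left, hCA, hCB] at hsum
  exact h.2 (inter_eq_left.mp (eq_of_subset_of_card_le inter_subset_left (by omega)))

theorem subset_of_card_inter_eq {S U C C₀ : Finset α} (hC : #C = j + 1)
    (hCC₀ : #(C ∩ C₀) = j) (hC₀U : C₀ ⊆ U) (hSC : S ⊆ C) (hSU : S ⊆ U) (hSC₀ : ¬S ⊆ C₀) :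
    C ⊆ U := by
  by_contra hCU
  have hle : #(C ∩ U) ≤ j := by
    have := card_lt_card (ssubset_of_subset_of_ne (inter_subset_left (s₂ := U))
      fun he => hCU (inter_eq_left.mp he))
    omega
  have heq : C ∩ C₀ = C ∩ U :=
    eq_of_subset_of_card_le (inter_subset_inter_left hC₀U) (hCC₀ ▸ hle)
  exact hSC₀ fun x hx => (mem_inter.mp (heq ▸ mem_inter.mpr ⟨hSC hx, hSU hx⟩ : x ∈ C ∩ C₀)).2

theorem exists_common_subset_of_pairwise_card_inter {F : Finset (Finset α)}
    (hcard : ∀ T ∈ F, #T = j + 1)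
    (hinter : (F : Set (Finset α)).Pairwise fun T T' => #(T ∩ T') = j) (hF : j + 3 ≤ #F) :
    ∃ S, #S = j ∧ ∀ T ∈ F, S ⊆ T := by
  obtain ⟨A, hA, B, hB, hAB⟩ := one_lt_card.mp (show 1 < #F by omega)
  have hS : #(A ∩ B) = j := hinter hA hB hAB
  have hdich : ∀ C ∈ F, A ∩ B ⊆ C ∨ C ⊆ A ∪ B := by
    intro C hC
    by_cases hCA : C = A
    · exact .inr (hCA ▸ subset_union_left)
    by_cases hCB : C = B
    · exact .inr (hCB ▸ subset_union_right)
    exact inter_subset_or_subset_union (hcard C hC) hS (hinter hC hA hCA) (hinter hC hB hCB)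
  by_contra! hnone
  obtain ⟨C₀, hC₀, hSC₀⟩ : ∃ C ∈ F, ¬A ∩ B ⊆ C := by simpa using hnone _ hS
  have hFU : F ⊆ (A ∪ B).powersetCard (j + 1) := fun C hC => by
    refine mem_powersetCard.mpr ⟨(hdich C hC).elim (fun hSC => ?_) id, hcard C hC⟩
    exact subset_of_card_inter_eq (hcard C hC) (hinter hC hC₀ fun he => hSC₀ (he ▸ hSC))
      ((hdich C₀ hC₀).resolve_left hSC₀) hSC inter_subset_union hSC₀
  have hU : #(A ∪ B) = j + 2 := by
    have := card_union_add_card_inter A B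
    rw [hcard A hA, hcard B hB] at this
    omega
  have := card_le_card hFU
  rw [card_powersetCard, hU, Nat.choose_succ_self_right] at this
  omega

end Sunflower

section Descent

variable {n i j k : ℕ}

def IsSubsetCompatible (ψ : Slice n i ≃ Slice n i) (χ : Slice n j ≃ Slice n j) : Prop :=
  ∀ S T, S.val ⊆ T.val ↔ (ψ S).val ⊆ (χ T).val

/-- `#(S ∪ T) = j + 1` is adjacency in the Johnson graph `J(n, j)`. -/
def PreservesJohnsonAdj (χ : Slice n j ≃ Slice n j) : Prop :=
  ∀ S T, #(S.val ∪ T.val) = j + 1 ↔ #((χ S).val ∪ (χ T).val) = j + 1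

theorem Slice.card_union_eq_succ_iff (S S' : Slice n j) :
    #(S.val ∪ S'.val) = j + 1 ↔
      S ≠ S' ∧ ∃ T : Slice n (j + 1), S.val ⊆ T.val ∧ S'.val ⊆ T.val := by
  refine ⟨fun h => ⟨?_, ⟨_, h⟩, subset_union_left, subset_union_right⟩,
    fun ⟨hne, T, hS, hS'⟩ => ?_⟩
  · rintro rfl
    simp [S.2] at h
  · have := card_le_card (union_subset hS hS')
    have := Slice.lt_card_union hne
    rw [T.2] at *
    omega

theorem Slice.subset_iff_exists_between (hik : i + 1 ≤ k) (S : Slice n i) (A : Slice n k) :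
    S.val ⊆ A.val ↔ ∃ T : Slice n (i + 1), S.val ⊆ T.val ∧ T.val ⊆ A.val :=
  ⟨fun h => Slice.exists_between h (by rw [S.2]; omega) (by rw [A.2]; omega),
    fun ⟨_, hST, hTA⟩ => hST.trans hTA⟩

theorem Slice.eq_of_forall_subset_iff (hjn : j + 1 < n) {S S' : Slice n j}
    (h : ∀ T : Slice n (j + 1), S.val ⊆ T.val ↔ S'.val ⊆ T.val) : S = S' := by
  refine (Slice.subset_iff_eq.mp fun a ha => ?_).symm
  by_contra haS
  obtain ⟨T, hST, haT⟩ := Slice.exists_superset_notMem haS (by rw [S.2]; omega) hjn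
  exact haT ((h T).mp hST ha)

theorem IsSubsetCompatible.preservesJohnsonAdj {ψ : Slice n j ≃ Slice n j}
    {χ : Slice n (j + 1) ≃ Slice n (j + 1)} (h : IsSubsetCompatible ψ χ) :
    PreservesJohnsonAdj ψ := by
  intro S S'
  rw [Slice.card_union_eq_succ_iff, Slice.card_union_eq_succ_iff, ψ.injective.ne_iff]
  refine and_congr_right fun _ => ⟨fun ⟨T, hS, hS'⟩ => ⟨χ T, (h _ _).mp hS, (h _ _).mp hS'⟩,
    fun ⟨T, hS, hS'⟩ => ⟨χ.symm T, (h _ _).mpr ?_, (h _ _).mpr ?_⟩⟩ <;> simpa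

theorem IsSubsetCompatible.trans {ψ : Slice n i ≃ Slice n i}
    {χ : Slice n (i + 1) ≃ Slice n (i + 1)} {φ : Slice n k ≃ Slice n k} (hik : i + 1 ≤ k)
    (hψ : IsSubsetCompatible ψ χ) (hχ : IsSubsetCompatible χ φ) : IsSubsetCompatible ψ φ := by
  intro S A
  rw [Slice.subset_iff_exists_between hik, Slice.subset_iff_exists_between hik]
  refine ⟨fun ⟨T, hST, hTA⟩ => ⟨χ T, (hψ _ _).mp hST, (hχ _ _).mp hTA⟩,
    fun ⟨T, hST, hTA⟩ => ⟨χ.symm T, (hψ _ _).mpr ?_, (hχ _ _).mpr ?_⟩⟩ <;> simpa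

def Slice.star (S : Finset (Fin n)) (j : ℕ) : Finset (Slice n j) :=
  univ.filter fun T => S ⊆ T.val

theorem Slice.card_star {S : Finset (Fin n)} (hS : #S = j) :
    #(Slice.star S (j + 1)) = n - j := by
  rw [show n - j = #Sᶜ by rw [card_compl, Fintype.card_fin, hS]]
  symm
  refine card_bij
    (fun x hx => ⟨insert x S, by rw [card_insert_of_notMem (by simpa using hx), hS]⟩)
    (fun x _ => by simp [Slice.star, subset_insert]) (fun x hx y hy hxy => ?_) (fun T hT => ?_)
  · exact (insert_inj (by simpa using hx)).mp (congrArg Subtype.val hxy)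
  · have hST : S ⊆ T.val := (mem_filter.mp hT).2
    obtain ⟨x, hx⟩ := card_eq_one.mp (show #(T.val \ S) = 1 by
      rw [card_sdiff_of_subset hST, T.2, hS]; omega)
    have hxT : x ∈ T.val \ S := hx ▸ mem_singleton_self x
    refine ⟨x, by simpa using (mem_sdiff.mp hxT).2, Subtype.ext ?_⟩
    change insert x S = T.val
    rw [insert_eq, ← hx, sdiff_union_of_subset hST]

theorem Slice.card_union_of_mem_star {S : Finset (Fin n)} (hS : #S = j) {T T' : Slice n (j + 1)}
    (hT : T ∈ Slice.star S (j + 1)) (hT' : T' ∈ Slice.star S (j + 1)) (hne : T ≠ T') :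
    #(T.val ∪ T'.val) = j + 1 + 1 := by
  have hlt := Slice.lt_card_union hne
  have hsum := card_union_add_card_inter T.val T'.val
  have := card_le_card (subset_inter (mem_filter.mp hT).2 (mem_filter.mp hT').2)
  rw [T.2, T'.2] at hsum
  omega

/-- The image under `χ` of the star of `S` is a family of `n - j` sets pairwise meeting in `j`
points, hence a sunflower. -/
theorem PreservesJohnsonAdj.exists_star_image {χ : Slice n (j + 1) ≃ Slice n (j + 1)}
    (hχ : PreservesJohnsonAdj χ) (hn : 2 * j + 3 ≤ n) (S : Slice n j) :
    ∃ S' : Slice n j, ∀ T, S.val ⊆ T.val ↔ S'.val ⊆ (χ T).val := by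
  have hinj : Injective fun T => (χ T).val := Subtype.val_injective.comp χ.injective
  set F := (Slice.star S.val (j + 1)).image fun T => (χ T).val
  have hpair : (F : Set (Finset (Fin n))).Pairwise fun X Y => #(X ∩ Y) = j := by
    rintro _ hX _ hY hXY
    obtain ⟨T, hT, rfl⟩ := mem_image.mp hX
    obtain ⟨T', hT', rfl⟩ := mem_image.mp hY
    have hU := (hχ T T').mp (Slice.card_union_of_mem_star S.2 hT hT' fun h => hXY (h ▸ rfl))
    have hsum := card_union_add_card_inter (χ T).val (χ T').val
    rw [(χ T).2, (χ T').2] at hsum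
    omega
  have hFcard : j + 3 ≤ #F := by
    rw [card_image_of_injective _ hinj, Slice.card_star S.2]
    omega
  obtain ⟨S', hS', hS'F⟩ := exists_common_subset_of_pairwise_card_inter
    (fun X hX => by obtain ⟨T, -, rfl⟩ := mem_image.mp hX; exact (χ T).2) hpair hFcard
  have himage : (Slice.star S.val (j + 1)).map χ.toEmbedding = Slice.star S' (j + 1) := by
    refine eq_of_subset_of_card_le (fun _ hX => ?_) ?_
    · obtain ⟨T, hT, rfl⟩ := mem_map.mp hX
      exact mem_filter.mpr ⟨mem_univ _, hS'F _ (mem_image_of_mem _ hT)⟩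
    · rw [card_map, Slice.card_star S.2, Slice.card_star hS']
  refine ⟨⟨S', hS'⟩, fun T => ⟨fun h => hS'F _ (mem_image_of_mem _ (by simpa [Slice.star])),
    fun h => ?_⟩⟩
  have : χ T ∈ (Slice.star S.val (j + 1)).map χ.toEmbedding :=
    himage ▸ mem_filter.mpr ⟨mem_univ _, h⟩
  rw [mem_map_equiv, χ.symm_apply_apply] at this
  exact (mem_filter.mp this).2

theorem PreservesJohnsonAdj.exists_isSubsetCompatible {χ : Slice n (j + 1) ≃ Slice n (j + 1)}
    (hχ : PreservesJohnsonAdj χ) (hn : 2 * j + 3 ≤ n) :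
    ∃ ψ : Slice n j ≃ Slice n j, IsSubsetCompatible ψ χ := by
  choose ψ hψ using hχ.exists_star_image hn
  have hinj : Injective ψ := fun S S' h =>
    Slice.eq_of_forall_subset_iff (by omega) fun T => by rw [hψ S, hψ S', h]
  exact ⟨Equiv.ofBijective ψ (Finite.injective_iff_bijective.mp hinj), hψ⟩

theorem preservesJohnsonAdj_of_kneserGraph (hk : 1 ≤ k) (hn : 2 * k + 1 ≤ n)
    (g : kneserGraph n k ≃g kneserGraph n k) : PreservesJohnsonAdj g.toEquiv := by
  intro A B
  rw [kneserGraph_card_union_eq_succ_iff hk hn, kneserGraph_card_union_eq_succ_iff hk hn]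
  simp [g.ncard_commonNeighbors, g.injective.ne_iff]

theorem isSubsetCompatible_self (χ : Slice n j ≃ Slice n j) : IsSubsetCompatible χ χ := by
  intro S T
  rw [Slice.subset_iff_eq, Slice.subset_iff_eq, χ.injective.eq_iff]

theorem exists_isSubsetCompatible_of_le (hk : 1 ≤ k) (hn : 2 * k + 1 ≤ n)
    (g : kneserGraph n k ≃g kneserGraph n k) {j : ℕ} (hj : j ≤ k) :
    ∃ ψ : Slice n j ≃ Slice n j, PreservesJohnsonAdj ψ ∧ IsSubsetCompatible ψ g.toEquiv := by
  induction hj using Nat.decreasingInduction with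
  | self =>
    exact ⟨g.toEquiv, preservesJohnsonAdj_of_kneserGraph hk hn g, isSubsetCompatible_self _⟩
  | of_succ j hjk ih =>
    obtain ⟨χ, hχ, hχg⟩ := ih
    obtain ⟨ψ, hψχ⟩ := hχ.exists_isSubsetCompatible (by omega)
    exact ⟨ψ, hψχ.preservesJohnsonAdj, hψχ.trans hjk hχg⟩

noncomputable def Slice.singletonEquiv (n : ℕ) : Fin n ≃ Slice n 1 :=
  Equiv.ofBijective (fun x => ⟨{x}, card_singleton x⟩)
    ⟨fun _ _ h => singleton_injective (congrArg Subtype.val h),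
      fun s => (card_eq_one.mp s.2).imp fun _ h => Subtype.ext h.symm⟩

theorem exists_eq_kneserPermAut (hk : 1 ≤ k) (hn : 2 * k + 1 ≤ n)
    (g : kneserGraph n k ≃g kneserGraph n k) : ∃ σ : Equiv.Perm (Fin n), g = kneserPermAut σ := by
  obtain ⟨ψ, -, hψ⟩ := exists_isSubsetCompatible_of_le hk hn g hk
  set e := Slice.singletonEquiv n
  refine ⟨e.trans (ψ.trans e.symm), RelIso.ext fun A => Subtype.ext (ext fun y => ?_)⟩
  have hsingle : ∀ s : Slice n 1, e.symm s ∈ A.val ↔ s.val ⊆ A.val := fun s => by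
    conv_rhs => rw [← e.apply_symm_apply s]
    exact singleton_subset_iff.symm
  rw [kneserPermAut_apply_val, mem_map_equiv, ← singleton_subset_iff]
  simp only [Equiv.symm_trans_apply, Equiv.symm_symm, hsingle, hψ _ A, Equiv.apply_symm_apply]
  rfl

end Descent

/-- An injective map into the subsets of `s` takes the value `∅` at most once and singleton
values at most `#s` times; every other value has at least two elements. -/
theorem two_mul_card_le_of_injective {α β : Type*} [Fintype α] [DecidableEq β] {s : Finset β}
    {f : α → Finset β} (hf : Injective f) (hfs : ∀ x, f x ⊆ s) :
    2 * Fintype.card α ≤ 2 + #s + ∑ x, #(f x) := by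
  have hempty : #(univ.filter fun x => f x = ∅) ≤ 1 :=
    card_le_one.mpr fun x hx y hy => hf (by rw [(mem_filter.mp hx).2, (mem_filter.mp hy).2])
  have hsingle : #(univ.filter fun x => #(f x) = 1) ≤ #s := by
    calc _ ≤ #(s.powersetCard 1) :=
          card_le_card_of_injOn f (fun x hx => mem_powersetCard.mpr ⟨hfs x, (mem_filter.mp hx).2⟩)
            hf.injOn
      _ = #s := by rw [card_powersetCard, Nat.choose_one_right]
  have hpoint : ∀ x,
      2 ≤ #(f x) + 2 * (if f x = ∅ then 1 else 0) + (if #(f x) = 1 then 1 else 0) := by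
    intro x
    by_cases h0 : f x = ∅
    · simp [h0]
    · have := card_pos.mpr (nonempty_iff_ne_empty.mpr h0)
      split_ifs <;> omega
  calc 2 * Fintype.card α = ∑ _x : α, 2 := by rw [sum_const, card_univ, smul_eq_mul, mul_comm]
    _ ≤ ∑ x, (#(f x) + 2 * (if f x = ∅ then 1 else 0) + (if #(f x) = 1 then 1 else 0)) :=
      sum_le_sum fun x _ => hpoint x
    _ = ∑ x, #(f x) + 2 * #(univ.filter fun x => f x = ∅) +
          #(univ.filter fun x => #(f x) = 1) := by
      rw [sum_add_distrib, sum_add_distrib, ← mul_sum, card_filter, card_filter]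
    _ ≤ 2 + #s + ∑ x, #(f x) := by linarith

section Trace

variable {n k : ℕ}

def pointTrace (S : Finset (Slice n k)) (x : Fin n) : Finset (Slice n k) :=
  S.filter fun A => x ∈ A.val

theorem injective_pointTrace_of_isDeterminingSet (hk : 1 ≤ k) (hkn : k < n)
    {S : Finset (Slice n k)} (hS : IsDeterminingSet (kneserGraph n k) S) :
    Injective (pointTrace S) := by
  intro x y hxy
  by_contra hne
  have hfix : ∀ A ∈ (S : Set (Slice n k)), kneserPermAut (Equiv.swap x y) A = A := by
    intro A hA
    have hxyA : x ∈ A.val ↔ y ∈ A.val := by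
      simpa [pointTrace, mem_coe.mp hA] using congrArg (A ∈ ·) hxy
    ext z
    rw [kneserPermAut_apply_val, mem_map_equiv, Equiv.symm_swap, Equiv.swap_apply_def]
    split_ifs <;> simp_all
  have hid := hS _ (SimpleGraph.Iso.refl) hfix
  obtain ⟨W, hxW, hyW⟩ := Slice.exists_superset_notMem (s := {x}) (a := y) (j := k)
    (by simpa using Ne.symm hne) (by simpa using hk) hkn
  have := congrArg (fun f => y ∈ (f W).val) hid
  simp [hyW, singleton_subset_iff.mp hxW] at this

theorem isDeterminingSet_of_injective_pointTrace (hk : 1 ≤ k) (hn : 2 * k + 1 ≤ n)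
    {S : Finset (Slice n k)} (hS : Injective (pointTrace S)) :
    IsDeterminingSet (kneserGraph n k) S := by
  intro g h hgh
  obtain ⟨σ, hσ⟩ := exists_eq_kneserPermAut hk hn (g.trans h.symm)
  have hfix : ∀ A ∈ S, A.val.map σ.toEmbedding = A.val := fun A hA => by
    simpa [hgh A hA] using (congrArg (fun f => (f A).val) hσ).symm
  have hσ1 : σ = 1 := Equiv.ext fun x => hS <| by
    ext A
    simp only [pointTrace, mem_filter, and_congr_right_iff]
    intro hA
    conv_lhs => rw [← hfix A hA]
    simp
  subst hσ1
  refine RelIso.ext fun A => (RelIso.symm_apply_eq h).mp ?_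
  simpa [Subtype.ext_iff, Equiv.Perm.one_def, Equiv.refl_toEmbedding] using
    congrArg (fun f => (f A).val) hσ

theorem sum_card_pointTrace (S : Finset (Slice n k)) : ∑ x, #(pointTrace S x) = #S * k := by
  have := sum_card_bipartiteAbove_eq_sum_card_bipartiteBelow (s := univ) (t := S)
    (r := fun (x : Fin n) (A : Slice n k) => x ∈ A.val)
  simp only [bipartiteAbove, bipartiteBelow, filter_mem_eq_inter, univ_inter] at this
  calc ∑ x, #(pointTrace S x) = ∑ A ∈ S, #A.val := this
    _ = #S * k := by rw [sum_congr rfl fun A _ => A.2, sum_const, smul_eq_mul]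

theorem two_mul_le_of_isDeterminingSet (hk : 1 ≤ k) (hkn : k < n) {S : Finset (Slice n k)}
    (hS : IsDeterminingSet (kneserGraph n k) S) : 2 * n ≤ 2 + #S * (k + 1) := by
  have := two_mul_card_le_of_injective (injective_pointTrace_of_isDeterminingSet hk hkn hS)
    (fun x => filter_subset _ S)
  rw [Fintype.card_fin, sum_card_pointTrace] at this
  linarith

end Trace

theorem disjoint_of_forall_card {α : Type*} {F G : Finset (Finset α)} {a b : ℕ}
    (hF : ∀ X ∈ F, #X = a) (hG : ∀ Y ∈ G, #Y = b) (hab : a ≠ b) : Disjoint F G :=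
  disjoint_left.mpr fun X hXF hXG => hab ((hF X hXF).symm.trans (hG X hXG))

section FamilyDegree

variable {α : Type*} [DecidableEq α]

def familyDegree (F : Finset (Finset α)) (i : α) : ℕ :=
  #(F.filter (i ∈ ·))

theorem familyDegree_union {F G : Finset (Finset α)} (h : Disjoint F G) (i : α) :
    familyDegree (F ∪ G) i = familyDegree F i + familyDegree G i := by
  rw [familyDegree, filter_union, card_union_of_disjoint (disjoint_filter_filter h)]
  rfl

theorem familyDegree_insert_empty (F : Finset (Finset α)) (i : α) :
    familyDegree (insert ∅ F) i = familyDegree F i := by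
  simp [familyDegree, filter_insert]

theorem familyDegree_singletons (V : Finset α) (i : α) :
    familyDegree (V.image ({·})) i = if i ∈ V then 1 else 0 := by
  rw [familyDegree, filter_image, card_image_of_injective _ singleton_injective]
  simp only [mem_singleton, filter_eq]
  split_ifs <;> simp

theorem card_singletons (V : Finset α) : #(V.image ({·} : α → Finset α)) = #V :=
  card_image_of_injective _ singleton_injective

end FamilyDegree

/-- Transposing the incidence relation, each point `i` of `Fin d` gives the `k`-set of members
of `T` containing it; the resulting family separates the points since `T` has no repeated member.
-/
theorem exists_isDeterminingSet_card_le {n k d : ℕ} (hk : 1 ≤ k) (hn : 2 * k + 1 ≤ n)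
    {T : Finset (Finset (Fin d))} (hT : #T = n) (hdeg : ∀ i, familyDegree T i = k) :
    ∃ S : Finset (Slice n k), #S ≤ d ∧ IsDeterminingSet (kneserGraph n k) S := by
  let e : Fin n ≃ T := (finCongr hT.symm).trans T.equivFin.symm
  let tr : Fin n → Finset (Fin d) := fun x => (e x).val
  have htr : Injective tr := Subtype.val_injective.comp e.injective
  have hcard (i : Fin d) : #(univ.filter fun x => i ∈ tr x) = k := by
    rw [← hdeg i, ← card_map ⟨tr, htr⟩]
    congr 1
    ext X
    simp only [mem_map, mem_filter, mem_univ, true_and, Embedding.coeFn_mk]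
    refine ⟨fun ⟨x, hx, hX⟩ => hX ▸ ⟨(e x).2, hx⟩, fun ⟨hX, hi⟩ => ⟨e.symm ⟨X, hX⟩, ?_⟩⟩
    simpa [tr] using hi
  let A (i : Fin d) : Slice n k := ⟨univ.filter fun x => i ∈ tr x, hcard i⟩
  refine ⟨univ.image A, card_image_le.trans (by simp),
    isDeterminingSet_of_injective_pointTrace hk hn fun x y hxy => htr ?_⟩
  have hmem (z : Fin n) (i : Fin d) : i ∈ tr z ↔ A i ∈ pointTrace (univ.image A) z := by
    simp [pointTrace, A]
  ext i
  rw [hmem, hmem, hxy]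

theorem card_filter_two_mul_add_one_ne {d : ℕ} :
    #(univ.filter fun i : Fin d => 2 * i.val + 1 ≠ d) = d - d % 2 := by
  have hsplit := card_filter_add_card_filter_not (s := univ)
    (fun i : Fin d => 2 * i.val + 1 = d)
  have hspecial : #(univ.filter fun i : Fin d => 2 * i.val + 1 = d) = d % 2 := by
    by_cases hd : d % 2 = 1
    · rw [hd, card_eq_one]
      exact ⟨⟨d / 2, by omega⟩, by ext i; simp [Fin.ext_iff]; omega⟩
    · rw [card_eq_zero.mpr (filter_eq_empty_iff.mpr fun i _ => by omega)]
      omega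
  rw [card_univ, Fintype.card_fin] at hsplit
  simp only [ne_eq]
  omega

section JumpPairs

variable {G : Type*} [DecidableEq G]

theorem pair_add_eq_pair_add_iff [AddLeftCancelSemigroup G] {v w g g' : G} :
    ({v, v + g} : Finset G) = {w, w + g'} ↔ v = w ∧ g = g' ∨ v = w + g' ∧ w = v + g := by
  rw [← coe_inj, coe_pair, coe_pair, Set.pair_eq_pair_iff]
  constructor
  · rintro (⟨rfl, h⟩ | ⟨h₁, h₂⟩)
    · exact .inl ⟨rfl, add_left_cancel h⟩
    · exact .inr ⟨h₁, h₂.symm⟩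
  · rintro (⟨rfl, rfl⟩ | ⟨h₁, h₂⟩)
    · exact .inl ⟨rfl, rfl⟩
    · exact .inr ⟨h₁, h₂.symm⟩

variable [AddGroup G]

def jumpPairs (g : G) (V : Finset G) : Finset (Finset G) :=
  V.image fun v => {v, v + g}

theorem injective_pair_add {g : G} (hg : g + g ≠ 0) :
    Injective fun v : G => ({v, v + g} : Finset G) := by
  intro v w h
  rcases pair_add_eq_pair_add_iff.mp h with ⟨h, -⟩ | ⟨h₁, h₂⟩
  · exact h
  · rw [h₂, add_assoc] at h₁
    exact absurd (left_eq_add.mp h₁) hg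

theorem card_of_mem_jumpPairs {g : G} (hg : g ≠ 0) {V : Finset G} :
    ∀ X ∈ jumpPairs g V, #X = 2 := by
  simp only [jumpPairs, mem_image, forall_exists_index, and_imp, forall_apply_eq_imp_iff₂]
  exact fun v _ => card_pair (by simpa using hg)

theorem disjoint_jumpPairs {g g' : G} (hne : g ≠ g') (hsum : g + g' ≠ 0) (V V' : Finset G) :
    Disjoint (jumpPairs g V) (jumpPairs g' V') := by
  simp only [jumpPairs, disjoint_left, mem_image, not_exists, not_and]
  rintro _ ⟨v, -, rfl⟩ w - h
  rcases pair_add_eq_pair_add_iff.mp h with ⟨-, h⟩ | ⟨h₁, h₂⟩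
  · exact hne h.symm
  · rw [h₁, add_assoc] at h₂
    exact hsum (left_eq_add.mp h₂)

theorem familyDegree_jumpPairs {g : G} (hg : g ≠ 0) {V : Finset G}
    (hinj : Set.InjOn (fun v : G => ({v, v + g} : Finset G)) V) (i : G) :
    familyDegree (jumpPairs g V) i =
      (if i ∈ V then 1 else 0) + (if i - g ∈ V then 1 else 0) := by
  rw [familyDegree, jumpPairs, filter_image, card_image_of_injOn (hinj.mono (filter_subset _ _))]
  have : V.filter (fun v => i ∈ ({v, v + g} : Finset G)) =
      ({i, i - g} : Finset G).filter (· ∈ V) := by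
    ext v
    simp only [mem_filter, mem_insert, mem_singleton, eq_sub_iff_add_eq]
    grind
  rw [this, card_filter, sum_pair fun h => hg (sub_eq_self.mp h.symm)]

end JumpPairs

section Construction

open Fin.NatCast

variable {d : ℕ} [NeZero d]

theorem Fin.natCast_ne_zero_of_lt {a : ℕ} (h₀ : 0 < a) (ha : a < d) : (a : Fin d) ≠ 0 := by
  simpa [Fin.natCast_eq_zero] using Nat.not_dvd_of_pos_of_lt h₀ ha

theorem Fin.natCast_add_natCast_ne_zero {a b : ℕ} (h₀ : 0 < a + b) (hab : a + b < d) :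
    (a : Fin d) + (b : Fin d) ≠ 0 := by
  rw [← Nat.cast_add]
  exact Fin.natCast_ne_zero_of_lt h₀ hab

theorem Fin.natCast_ne_natCast {a b : ℕ} (hab : a ≠ b) (ha : a < d) (hb : b < d) :
    (a : Fin d) ≠ (b : Fin d) := fun h =>
  hab (by simpa [Fin.val_cast_of_lt ha, Fin.val_cast_of_lt hb] using congrArg Fin.val h)

/-- The edges of the circulant graph on `ℤ/d` with jumps `1, …, t`. -/
def circulantPairs (d t : ℕ) [NeZero d] : Finset (Finset (Fin d)) :=
  (Icc 1 t).biUnion fun g => jumpPairs (g : Fin d) univ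

variable {t : ℕ}

theorem pairwiseDisjoint_circulantPairs (ht : 2 * t < d) :
    (Icc 1 t : Set ℕ).PairwiseDisjoint fun g => jumpPairs (g : Fin d) univ := by
  intro g hg g' hg' hne
  simp only [coe_Icc, Set.mem_Icc] at hg hg'
  exact disjoint_jumpPairs (Fin.natCast_ne_natCast hne (by omega) (by omega))
    (Fin.natCast_add_natCast_ne_zero (by omega) (by omega)) _ _

theorem card_circulantPairs (ht : 2 * t < d) : #(circulantPairs d t) = t * d := by
  rw [circulantPairs, card_biUnion (pairwiseDisjoint_circulantPairs ht)]
  rw [sum_congr rfl fun g hg => ?_, sum_const, Nat.card_Icc, smul_eq_mul, Nat.add_sub_cancel]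
  rw [mem_Icc] at hg
  rw [jumpPairs, card_image_of_injective _ (injective_pair_add
    (Fin.natCast_add_natCast_ne_zero (by omega) (by omega))), card_univ, Fintype.card_fin]

theorem familyDegree_circulantPairs (ht : 2 * t < d) (i : Fin d) :
    familyDegree (circulantPairs d t) i = 2 * t := by
  rw [familyDegree, circulantPairs, filter_biUnion, card_biUnion fun g hg g' hg' hne =>
    disjoint_filter_filter (pairwiseDisjoint_circulantPairs ht hg hg' hne)]
  rw [sum_congr rfl fun g hg => ?_, sum_const, Nat.card_Icc, smul_eq_mul, Nat.add_sub_cancel,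
    mul_comm]
  rw [mem_Icc] at hg
  rw [← familyDegree, familyDegree_jumpPairs (Fin.natCast_ne_zero_of_lt (by omega) (by omega))
    (injective_pair_add (Fin.natCast_add_natCast_ne_zero (by omega) (by omega))).injOn]
  simp

theorem card_of_mem_circulantPairs (ht : 2 * t < d) : ∀ X ∈ circulantPairs d t, #X = 2 := by
  simp only [circulantPairs, mem_biUnion, mem_Icc, forall_exists_index, and_imp]
  exact fun X g hg₁ hg₂ hX =>
    card_of_mem_jumpPairs (Fin.natCast_ne_zero_of_lt (by omega) (by omega)) X hX

/-- The pairs `{v, v + ⌊d/2⌋}` for `v < ⌈d/2⌉`: a perfect matching when `d` is even; when `d`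
is odd, a matching of all points except `⌊d/2⌋`, which is covered twice. -/
def halfMatching (d : ℕ) [NeZero d] : Finset (Finset (Fin d)) :=
  jumpPairs ((d / 2 : ℕ) : Fin d) (univ.filter fun v => v.val < (d + 1) / 2)

theorem val_add_half {v : Fin d} (hv : v.val < (d + 1) / 2) :
    (v + ((d / 2 : ℕ) : Fin d)).val = v.val + d / 2 := by
  rw [Fin.val_add_eq_ite, Fin.val_cast_of_lt (by omega), if_neg (by omega)]

theorem injOn_halfMatching (hd : 2 ≤ d) :
    Set.InjOn (fun v : Fin d => ({v, v + ((d / 2 : ℕ) : Fin d)} : Finset (Fin d)))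
      (univ.filter fun v : Fin d => v.val < (d + 1) / 2) := by
  intro v hv w hw h
  simp only [coe_filter, mem_univ, true_and] at hv hw
  rcases pair_add_eq_pair_add_iff.mp h with ⟨h, -⟩ | ⟨h₁, h₂⟩
  · exact h
  · have := congrArg Fin.val h₁
    have := congrArg Fin.val h₂
    rw [val_add_half hv] at *
    rw [val_add_half hw] at *
    omega

theorem card_halfMatching (hd : 2 ≤ d) : #(halfMatching d) = (d + 1) / 2 := by
  rw [halfMatching, jumpPairs, card_image_of_injOn (injOn_halfMatching hd),
    Fin.card_filter_val_lt, min_eq_right (by omega)]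

theorem familyDegree_halfMatching (hd : 2 ≤ d) (i : Fin d) :
    familyDegree (halfMatching d) i = if 2 * i.val + 1 = d then 2 else 1 := by
  rw [halfMatching, familyDegree_jumpPairs (Fin.natCast_ne_zero_of_lt (by omega) (by omega))
    (injOn_halfMatching hd)]
  simp only [mem_filter, mem_univ, true_and]
  have hh : ((d / 2 : ℕ) : Fin d).val = d / 2 := Fin.val_cast_of_lt (by omega)
  have hsub : (i - ((d / 2 : ℕ) : Fin d)).val =
      if d / 2 ≤ i.val then i.val - d / 2 else d + i.val - d / 2 := by
    split_ifs with hc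
    · rw [Fin.coe_sub_iff_le.mpr (Fin.le_def.mpr (by rw [hh]; exact hc)), hh]
    · rw [Fin.coe_sub_iff_lt.mpr (Fin.lt_def.mpr (by rw [hh]; omega)), hh]
  rw [hsub]
  have := i.2
  split_ifs <;> omega

theorem card_of_mem_halfMatching (hd : 2 ≤ d) : ∀ X ∈ halfMatching d, #X = 2 :=
  card_of_mem_jumpPairs (Fin.natCast_ne_zero_of_lt (by omega) (by omega))

theorem disjoint_circulantPairs_halfMatching (ht : 2 * t + 2 ≤ d) :
    Disjoint (circulantPairs d t) (halfMatching d) := by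
  rw [circulantPairs, disjoint_biUnion_left]
  intro g hg
  rw [mem_Icc] at hg
  exact disjoint_jumpPairs (Fin.natCast_ne_natCast (by omega) (by omega) (by omega))
    (Fin.natCast_add_natCast_ne_zero (by omega) (by omega)) _ _

theorem exists_family_of_odd (ht : 2 * t < d) :
    ∃ T : Finset (Finset (Fin d)), #T = 1 + d + t * d ∧ ∀ i, familyDegree T i = 2 * t + 1 := by
  have hone : ∀ X ∈ univ.image ({·} : Fin d → Finset (Fin d)), #X = 1 := by simp
  have hdisj := disjoint_of_forall_card hone (card_of_mem_circulantPairs ht) (by norm_num)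
  have hempty : ∅ ∉ univ.image ({·}) ∪ circulantPairs d t := by
    simp only [mem_union, not_or]
    exact ⟨fun h => by simpa using hone _ h,
      fun h => by simpa using card_of_mem_circulantPairs ht _ h⟩
  refine ⟨insert ∅ (univ.image ({·}) ∪ circulantPairs d t), ?_, fun i => ?_⟩
  · rw [card_insert_of_notMem hempty, card_union_of_disjoint hdisj, card_singletons, card_univ,
      Fintype.card_fin, card_circulantPairs ht]
    ring
  · rw [familyDegree_insert_empty, familyDegree_union hdisj, familyDegree_singletons,
      familyDegree_circulantPairs ht, if_pos (mem_univ i)]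
    ring

/-- Every point gets degree `1 + 2t + 1` from its singleton, the circulant and the matching,
except that the point covered twice by the matching (if `d` is odd) has no singleton. -/
theorem exists_family_of_even (ht : 2 * t + 2 ≤ d) :
    ∃ T : Finset (Finset (Fin d)), #T = 1 + (d - d % 2) + t * d + (d + 1) / 2 ∧
      ∀ i, familyDegree T i = 2 * t + 2 := by
  set W := univ.filter fun i : Fin d => 2 * i.val + 1 ≠ d
  have hone : ∀ X ∈ W.image ({·}), #X = 1 := by simp
  have htwo : ∀ X ∈ circulantPairs d t ∪ halfMatching d, #X = 2 := fun X hX =>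
    (mem_union.mp hX).elim (card_of_mem_circulantPairs (by omega) X)
      (card_of_mem_halfMatching (by omega) X)
  have hdisj := disjoint_of_forall_card hone htwo (by norm_num)
  have hdisj' := disjoint_circulantPairs_halfMatching (d := d) ht
  have hempty : ∅ ∉ W.image ({·}) ∪ (circulantPairs d t ∪ halfMatching d) := by
    simp only [mem_union (s := W.image _), not_or]
    exact ⟨fun h => by simpa using hone _ h, fun h => by simpa using htwo _ h⟩
  refine ⟨insert ∅ (W.image ({·}) ∪ (circulantPairs d t ∪ halfMatching d)), ?_, fun i => ?_⟩
  · rw [card_insert_of_notMem hempty, card_union_of_disjoint hdisj, card_union_of_disjoint hdisj',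
      card_singletons, card_filter_two_mul_add_one_ne, card_circulantPairs (by omega),
      card_halfMatching (by omega)]
    ring
  · rw [familyDegree_insert_empty, familyDegree_union hdisj, familyDegree_union hdisj',
      familyDegree_singletons, familyDegree_circulantPairs (by omega),
      familyDegree_halfMatching (by omega)]
    simp only [W, mem_filter, mem_univ, true_and]
    split_ifs <;> omega

end Construction

theorem exists_family_card_familyDegree {d k : ℕ} (hk : 1 ≤ k) (hkd : k ≤ d) :
    ∃ T : Finset (Finset (Fin d)), #T = d * (k + 1) / 2 + 1 ∧ ∀ i, familyDegree T i = k := by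
  have : NeZero d := ⟨by omega⟩
  obtain ⟨t, rfl | rfl⟩ : ∃ t, k = 2 * t + 1 ∨ k = 2 * t + 2 := ⟨(k - 1) / 2, by omega⟩
  · obtain ⟨T, hT, hdeg⟩ := exists_family_of_odd (d := d) (t := t) (by omega)
    refine ⟨T, ?_, hdeg⟩
    rw [hT, show d * (2 * t + 1 + 1) = 2 * (d + t * d) by ring]
    omega
  · obtain ⟨T, hT, hdeg⟩ := exists_family_of_even (d := d) (t := t) (by omega)
    refine ⟨T, ?_, hdeg⟩
    rw [hT, show d * (2 * t + 2 + 1) = 2 * (t * d) + 3 * d by ring]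
    omega

theorem two_mul_add_one_le {d k : ℕ} (hkd : k ≤ d) (hd : 2 < d) :
    2 * k + 1 ≤ d * (k + 1) / 2 + 1 := by
  have : 4 * k ≤ d * (k + 1) := by
    rcases le_or_gt k 3 with hk3 | hk3 <;> nlinarith
  omega

theorem stmt_12 (d k : ℕ) (hk : 0 < k) (hkd : k ≤ d) (hd : 2 < d) :
    detNumber (kneserGraph (d * (k + 1) / 2 + 1) k) = d := by
  have hn := two_mul_add_one_le hkd hd
  obtain ⟨T, hTcard, hTdeg⟩ := exists_family_card_familyDegree hk hkd
  obtain ⟨S, hSd, hS⟩ := exists_isDeterminingSet_card_le hk hn hTcard hTdeg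
  refine le_antisymm (le_trans (Nat.sInf_le ⟨S, rfl, hS⟩) hSd) (le_csInf ⟨#S, S, rfl, hS⟩ ?_)
  rintro _ ⟨S', rfl, hS'⟩
  have hcount := two_mul_le_of_isDeterminingSet hk (by omega) hS'
  by_contra! hlt
  have := Nat.mul_le_mul_right (k + 1) hlt
  rw [Nat.succ_mul] at this
  omega
end

section
/- The only Kneser graphs K_{n:k} with n ≥ 2k+1 and determining number 3 are K_{4:1}, K_{5:2}, and K_{7:3}. -/
/-!
A transposition `(x y)` of `Fin n` induces an automorphism of `K_{n:k}` fixing every vertex that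
contains both or neither of `x, y`, so a determining set `S` must separate the points of `Fin n`.
Double counting incidences, at most `1 + #S` points lie in fewer than two members of `S`, whence
`2n ≤ #S (k + 1) + 2`. For `#S = 3` and `n ≥ 2k + 1` this leaves `(n, k) ∈ {(3,1), (4,1), (5,2),
(7,3)}`, and for `#S = 2` it excludes the last three; `K_{3:1}` is a triangle, determined by two
vertices. For the three remaining graphs an explicit triple is determining: automorphisms preserve
whether two vertices are equal, adjacent, or have a common neighbour, which in `K_{n:k}` is read off
from `u ∩ v` and `#(u ∪ v)`, and one or two rounds of "a vertex with a unique such profile against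
the fixed vertices is fixed" reach every vertex.
-/

open Finset

namespace SimpleGraph

variable {V W : Type*} {G : SimpleGraph V} {H : SimpleGraph W}

theorem Iso.commonNeighbors_nonempty_iff (f : G ≃g H) {u v : V} :
    (H.commonNeighbors (f u) (f v)).Nonempty ↔ (G.commonNeighbors u v).Nonempty := by
  constructor
  · rintro ⟨w, hw⟩
    refine ⟨f.symm w, ?_⟩
    rwa [mem_commonNeighbors, ← f.map_adj_iff, ← f.map_adj_iff, f.apply_symm_apply]
  · rintro ⟨w, hw⟩
    exact ⟨f w, by simpa only [mem_commonNeighbors, f.map_adj_iff] using hw⟩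

end SimpleGraph

section DeterminingSet

variable {V : Type*} {G : SimpleGraph V}

theorem isDeterminingSet_of_forall_apply_eq_self {S : Set V}
    (h : ∀ f : G ≃g G, (∀ v ∈ S, f v = v) → ∀ v, f v = v) : IsDeterminingSet G S := by
  intro g g' hgg'
  have hfix := h (g.trans g'.symm) fun v hv => by simp [hgg' v hv]
  ext v
  simpa [RelIso.symm_apply_eq] using hfix v

theorem detNumber_le {S : Finset V} (hS : IsDeterminingSet G S) : detNumber G ≤ #S :=
  Nat.sInf_le ⟨S, rfl, hS⟩

theorem exists_isDeterminingSet_card_eq_detNumber [Fintype V] :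
    ∃ S : Finset V, #S = detNumber G ∧ IsDeterminingSet G S := by
  have hne : {m | ∃ S : Finset V, #S = m ∧ IsDeterminingSet G S}.Nonempty :=
    ⟨_, univ, rfl, fun _ _ h => RelIso.ext fun v => h v (mem_univ v)⟩
  exact Nat.sInf_mem hne

theorem detNumber_eq_zero_of_subsingleton [Subsingleton V] : detNumber G = 0 :=
  Nat.sInf_eq_zero.2 <| .inl ⟨∅, rfl, fun _ _ _ => RelIso.ext fun _ => Subsingleton.elim _ _⟩

end DeterminingSet

section Refinement

variable {V β : Type*} [Fintype V] [DecidableEq V] [DecidableEq β] {G : SimpleGraph V}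

def refineFixed (τ : V → V → β) (F : Finset V) : Finset V :=
  F ∪ ({v | ∀ w, (∀ u ∈ F, τ u w = τ u v) → w = v} : Finset V)

variable {τ : V → V → β}

theorem apply_eq_self_of_mem_refineFixed (hτ : ∀ (f : G ≃g G) (u v : V), τ (f u) (f v) = τ u v)
    (f : G ≃g G) {F : Finset V} (hF : ∀ u ∈ F, f u = u) :
    ∀ v ∈ refineFixed τ F, f v = v := by
  intro v hv
  rcases mem_union.1 hv with hv | hv
  · exact hF v hv
  · refine (mem_filter.1 hv).2 (f v) fun u hu => ?_
    calc τ u (f v) = τ (f u) (f v) := by rw [hF u hu]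
      _ = τ u v := hτ f u v

theorem isDeterminingSet_of_iterate_refineFixed_eq_univ
    (hτ : ∀ (f : G ≃g G) (u v : V), τ (f u) (f v) = τ u v) {S : Finset V} {m : ℕ}
    (h : (refineFixed τ)^[m] S = univ) : IsDeterminingSet G S := by
  refine isDeterminingSet_of_forall_apply_eq_self fun f hf v => ?_
  have hfix : ∀ m, ∀ v ∈ (refineFixed τ)^[m] S, f v = v := by
    intro m
    induction m with
    | zero => exact hf
    | succ m ih =>
      rw [Function.iterate_succ_apply']
      exact apply_eq_self_of_mem_refineFixed hτ f ih
  exact hfix m v (h ▸ mem_univ v)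

end Refinement

theorem two_mul_card_le_sum_card_add_card_add_two {α : Type*} [Fintype α] [DecidableEq α]
    (B : Finset (Finset α)) (hB : ∀ x y : α, (∀ t ∈ B, x ∈ t ↔ y ∈ t) → x = y) :
    2 * Fintype.card α ≤ ∑ t ∈ B, #t + #B + 2 := by
  set trace : α → Finset (Finset α) := fun a => {t ∈ B | a ∈ t}
  have htrace : Function.Injective trace := fun x y hxy =>
    hB x y fun t ht => by simpa [trace, ht] using congrArg (t ∈ ·) hxy
  have hdouble : ∑ t ∈ B, #t = ∑ a, #(trace a) := by
    simp only [trace, card_eq_sum_ones, sum_filter]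
    rw [sum_comm]
    simp
  -- A point lying in at most one set of `B` is determined by which one, so there are at most
  -- `1 + #B` such points; every other point is counted at least twice.
  have hzero : #({a | #(trace a) = 0} : Finset α) ≤ 1 :=
    card_le_one.2 fun x hx y hy => htrace <| by
      simp only [mem_filter, mem_univ, true_and, card_eq_zero] at hx hy
      rw [hx, hy]
  have hone : #({a | #(trace a) = 1} : Finset α) ≤ #B := by
    calc #({a | #(trace a) = 1} : Finset α) ≤ #(B.powersetCard 1) :=
          card_le_card_of_injOn trace (fun a ha => by
            simp [trace, mem_powersetCard, (mem_filter.1 ha).2]) htrace.injOn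
      _ = #B := by simp
  have hpoint : ∀ a, 2 ≤ #(trace a) + 2 * (if #(trace a) = 0 then 1 else 0) +
      (if #(trace a) = 1 then 1 else 0) := by
    intro a
    split_ifs <;> omega
  calc 2 * Fintype.card α = ∑ _a : α, 2 := by simp [mul_comm]
    _ ≤ ∑ a, (#(trace a) + 2 * (if #(trace a) = 0 then 1 else 0) +
        (if #(trace a) = 1 then 1 else 0)) := sum_le_sum fun a _ => hpoint a
    _ = ∑ t ∈ B, #t + 2 * #({a | #(trace a) = 0} : Finset α) +
        #({a | #(trace a) = 1} : Finset α) := by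
      simp only [sum_add_distrib, ← mul_sum, hdouble, card_filter]
    _ ≤ ∑ t ∈ B, #t + #B + 2 := by omega

section Kneser

variable {n k : ℕ}

theorem kneserGraph_adj_iff (hk : k ≠ 0) {u v : {s : Finset (Fin n) // #s = k}} :
    (kneserGraph n k).Adj u v ↔ Disjoint u.1 v.1 := by
  refine ⟨And.left, fun h => ⟨h, fun huv => hk ?_⟩⟩
  rw [← u.2, card_eq_zero, ← disjoint_self_iff_empty]
  exact huv ▸ h

theorem kneserGraph_commonNeighbors_nonempty_iff (hk : k ≠ 0)
    {u v : {s : Finset (Fin n) // #s = k}} :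
    ((kneserGraph n k).commonNeighbors u v).Nonempty ↔ #(u.1 ∪ v.1) + k ≤ n := by
  simp only [Set.Nonempty, SimpleGraph.mem_commonNeighbors, kneserGraph_adj_iff hk]
  constructor
  · rintro ⟨w, hu, hv⟩
    have := card_le_univ (u.1 ∪ v.1 ∪ w.1)
    rw [card_union_of_disjoint (disjoint_union_left.2 ⟨hu, hv⟩), w.2, Fintype.card_fin] at this
    exact this
  · intro h
    obtain ⟨w, hw, hwk⟩ := exists_subset_card_eq (s := (u.1 ∪ v.1)ᶜ) (n := k)
      (by rw [card_compl, Fintype.card_fin]; omega)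
    have hdisj : Disjoint (u.1 ∪ v.1) w := disjoint_of_subset_right hw disjoint_compl_right
    exact ⟨⟨w, hwk⟩, (disjoint_union_left.1 hdisj).1, (disjoint_union_left.1 hdisj).2⟩

-- For `k ≠ 0` this is `(dist u v = 0, dist u v = 1, dist u v ≤ 2)`, by the two lemmas above.
def kneserDistClass (n k : ℕ) (u v : {s : Finset (Fin n) // #s = k}) : Bool × Bool × Bool :=
  (u = v, Disjoint u.1 v.1, #(u.1 ∪ v.1) + k ≤ n)

theorem kneserDistClass_apply_iso (hk : k ≠ 0) (f : kneserGraph n k ≃g kneserGraph n k)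
    (u v : {s : Finset (Fin n) // #s = k}) :
    kneserDistClass n k (f u) (f v) = kneserDistClass n k u v := by
  simp only [kneserDistClass, Prod.mk.injEq, decide_eq_decide]
  refine ⟨f.injective.eq_iff, ?_, ?_⟩
  · rw [← kneserGraph_adj_iff hk, ← kneserGraph_adj_iff hk, f.map_adj_iff]
  · rw [← kneserGraph_commonNeighbors_nonempty_iff hk,
      ← kneserGraph_commonNeighbors_nonempty_iff hk, f.commonNeighbors_nonempty_iff]

def kneserGraphIsoOfPerm (σ : Equiv.Perm (Fin n)) : kneserGraph n k ≃g kneserGraph n k where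
  toEquiv := σ.finsetCongr.subtypeEquiv fun s => by simp
  map_rel_iff' {u v} := by
    simp [kneserGraph, Equiv.finsetCongr_apply, disjoint_map, Subtype.ext_iff]

theorem kneserGraphIsoOfPerm_swap_apply {x y : Fin n} {v : {s : Finset (Fin n) // #s = k}}
    (h : x ∈ v.1 ↔ y ∈ v.1) : kneserGraphIsoOfPerm (Equiv.swap x y) v = v := by
  ext z
  simp only [kneserGraphIsoOfPerm, RelIso.coe_fn_mk, Equiv.subtypeEquiv_apply,
    Equiv.finsetCongr_apply, mem_map_equiv, Equiv.symm_swap, Equiv.swap_apply_def]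
  split_ifs with hzx hzy
  · subst hzx; exact h.symm
  · subst hzy; exact h
  · rfl

theorem eq_of_forall_mem_iff_of_isDeterminingSet (hk : k ≠ 0) (hkn : k < n)
    {S : Set {s : Finset (Fin n) // #s = k}} (hS : IsDeterminingSet (kneserGraph n k) S)
    {x y : Fin n} (hxy : ∀ v ∈ S, x ∈ v.1 ↔ y ∈ v.1) : x = y := by
  by_contra hne
  obtain ⟨s, hxs, hsy, hs⟩ := exists_subsuperset_card_eq (s := {x}) (t := univ.erase y) (n := k)
    (by simpa [eq_comm] using hne) (by simpa using Nat.one_le_iff_ne_zero.2 hk)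
    (by rw [card_erase_of_mem (mem_univ y), card_univ, Fintype.card_fin]; omega)
  have hswap := hS (kneserGraphIsoOfPerm (Equiv.swap x y)) (RelIso.refl _)
    fun v hv => kneserGraphIsoOfPerm_swap_apply (hxy v hv)
  have hys : y ∈ (kneserGraphIsoOfPerm (k := k) (Equiv.swap x y) ⟨s, hs⟩).1 := by
    simp [kneserGraphIsoOfPerm, mem_map_equiv, singleton_subset_iff.1 hxs]
  rw [hswap] at hys
  simpa using hsy hys

end Kneser

section KneserDetNumber

variable {n k : ℕ}

theorem two_mul_le_card_mul_add_two_of_isDeterminingSet (hk : k ≠ 0) (hkn : k < n)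
    {S : Finset {s : Finset (Fin n) // #s = k}} (hS : IsDeterminingSet (kneserGraph n k) S) :
    2 * n ≤ #S * (k + 1) + 2 := by
  have h := two_mul_card_le_sum_card_add_card_add_two (S.map (Function.Embedding.subtype _))
    fun x y hxy => eq_of_forall_mem_iff_of_isDeterminingSet hk hkn hS fun v hv =>
      hxy v.1 (mem_map_of_mem _ hv)
  simp only [Fintype.card_fin, sum_map, Function.Embedding.coe_subtype, card_map] at h
  rw [sum_congr rfl fun v _ => v.2, sum_const, smul_eq_mul] at h
  linarith

theorem two_mul_le_detNumber_kneserGraph_mul_add_two (hk : k ≠ 0) (hkn : k < n) :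
    2 * n ≤ detNumber (kneserGraph n k) * (k + 1) + 2 := by
  obtain ⟨S, hcard, hS⟩ := exists_isDeterminingSet_card_eq_detNumber (G := kneserGraph n k)
  exact hcard ▸ two_mul_le_card_mul_add_two_of_isDeterminingSet hk hkn hS

theorem detNumber_kneserGraph_zero : detNumber (kneserGraph n 0) = 0 :=
  have : Subsingleton {s : Finset (Fin n) // #s = 0} :=
    ⟨fun u v => Subtype.ext <| by rw [card_eq_zero.1 u.2, card_eq_zero.1 v.2]⟩
  detNumber_eq_zero_of_subsingleton

theorem detNumber_kneserGraph_eq_three (hk : k ≠ 0) (hkn : k + 2 < n)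
    (S : Finset {s : Finset (Fin n) // #s = k}) (hcard : #S = 3)
    (hS : IsDeterminingSet (kneserGraph n k) S) : detNumber (kneserGraph n k) = 3 := by
  refine le_antisymm (hcard ▸ detNumber_le hS) (not_lt.1 fun hlt => ?_)
  have hbound := two_mul_le_detNumber_kneserGraph_mul_add_two (n := n) hk (by omega)
  have : detNumber (kneserGraph n k) * (k + 1) ≤ 2 * (k + 1) := Nat.mul_le_mul_right _ (by omega)
  omega

theorem isDeterminingSet_kneserGraph_of_iterate_refineFixed (hk : k ≠ 0)
    {S : Finset {s : Finset (Fin n) // #s = k}} (m : ℕ)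
    (h : (refineFixed (kneserDistClass n k))^[m] S = univ) :
    IsDeterminingSet (kneserGraph n k) S :=
  isDeterminingSet_of_iterate_refineFixed_eq_univ (kneserDistClass_apply_iso hk) h

theorem detNumber_kneserGraph_three_one_le : detNumber (kneserGraph 3 1) ≤ 2 :=
  (detNumber_le (S := ({{0}, {1}} : Finset (Finset (Fin 3))).subtype (#· = 1))
    (isDeterminingSet_kneserGraph_of_iterate_refineFixed one_ne_zero 1 (by decide +kernel))).trans
    (by decide)

theorem detNumber_kneserGraph_four_one : detNumber (kneserGraph 4 1) = 3 :=
  detNumber_kneserGraph_eq_three one_ne_zero (by norm_num)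
    (({{0}, {1}, {2}} : Finset (Finset (Fin 4))).subtype (#· = 1)) (by decide)
    (isDeterminingSet_kneserGraph_of_iterate_refineFixed one_ne_zero 1 (by decide +kernel))

theorem detNumber_kneserGraph_five_two : detNumber (kneserGraph 5 2) = 3 :=
  detNumber_kneserGraph_eq_three two_ne_zero (by norm_num)
    (({{0, 1}, {0, 2}, {0, 3}} : Finset (Finset (Fin 5))).subtype (#· = 2)) (by decide)
    (isDeterminingSet_kneserGraph_of_iterate_refineFixed two_ne_zero 1 (by decide +kernel))

theorem detNumber_kneserGraph_seven_three : detNumber (kneserGraph 7 3) = 3 :=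
  detNumber_kneserGraph_eq_three three_ne_zero (by norm_num)
    (({{0, 1, 2}, {0, 3, 4}, {1, 3, 5}} : Finset (Finset (Fin 7))).subtype (#· = 3)) (by decide)
    (isDeterminingSet_kneserGraph_of_iterate_refineFixed three_ne_zero 2 (by decide +kernel))

end KneserDetNumber

theorem stmt_16 (n k : ℕ) (hn : 2 * k + 1 ≤ n) :
    detNumber (kneserGraph n k) = 3 ↔
      (n = 4 ∧ k = 1) ∨ (n = 5 ∧ k = 2) ∨ (n = 7 ∧ k = 3) := by
  refine ⟨fun h => ?_, ?_⟩
  · obtain rfl | hk := eq_or_ne k 0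
    · simp [detNumber_kneserGraph_zero] at h
    have hbound := two_mul_le_detNumber_kneserGraph_mul_add_two (n := n) hk (by omega)
    have hK31 : ¬(n = 3 ∧ k = 1) := by
      rintro ⟨rfl, rfl⟩
      have := detNumber_kneserGraph_three_one_le
      omega
    rw [h] at hbound
    omega
  · rintro (⟨rfl, rfl⟩ | ⟨rfl, rfl⟩ | ⟨rfl, rfl⟩)
    exacts [detNumber_kneserGraph_four_one, detNumber_kneserGraph_five_two,
      detNumber_kneserGraph_seven_three]
end
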